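/- Let Φ(t) = log(1+t) on ℂⁿ (Fubini–Study potential in affine coordinates) with metric g, and let λ be its Einstein constant (Σ_h ∂²g^{i\bar j}/∂z_h∂\bar z_h(0) = λδ^{ij}). Then Δ³(|z₁|⁴)(0) = 12λ + 16, where Δ is the Kähler Laplacian of g. -/

import Mathlib

/-- The Wirtinger derivative `∂/∂z_i` of a function on `ℂⁿ`. -/
noncomputable def dz {n : ℕ} (i : Fin n) (f : (Fin n → ℂ) → ℂ) : (Fin n → ℂ) → ℂ :=
  fun z => (fderiv ℝ f z (Pi.single i 1) - Complex.I * fderiv ℝ f z (Pi.single i Complex.I)) / 2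

/-- The Wirtinger derivative `∂/∂\bar z_i` of a function on `ℂⁿ`. -/
noncomputable def dzbar {n : ℕ} (i : Fin n) (f : (Fin n → ℂ) → ℂ) : (Fin n → ℂ) → ℂ :=
  fun z => (fderiv ℝ f z (Pi.single i 1) + Complex.I * fderiv ℝ f z (Pi.single i Complex.I)) / 2

/-- The complex Euclidean Laplacian `Δ_c = ∑ i, ∂²/(∂z_i ∂\bar z_i)`. -/
noncomputable def lapC {n : ℕ} (f : (Fin n → ℂ) → ℂ) : (Fin n → ℂ) → ℂ :=
  fun z => ∑ i, dzbar i (dz i f) z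

/-- The inverse of the Fubini–Study metric in affine coordinates:
`g^{i \bar j} = (1 + |z|²)(δ_{ij} + z_j \bar z_i)`. -/
noncomputable def ginvFS {n : ℕ} (z : Fin n → ℂ) (i j : Fin n) : ℂ :=
  ((1 + ∑ k, Complex.normSq (z k) : ℝ) : ℂ) *
    ((if i = j then 1 else 0) + z j * starRingEnd ℂ (z i))

/-- The Kähler Laplacian `Δ = ∑ g^{i \bar j} ∂²/(∂z_j ∂\bar z_i)` of the Fubini–Study
metric on `ℂⁿ` with potential `log(1 + |z|²)`. -/
noncomputable def kLapFS {n : ℕ} (f : (Fin n → ℂ) → ℂ) : (Fin n → ℂ) → ℂ :=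
  fun z => ∑ i, ∑ j, ginvFS z i j * dzbar i (dz j f) z

/-!
Since `g^{i\bar j} = (1 + |z|²)(δ_{ij} + z_j \bar z_i)`, the Laplacian is
`Δ = (1 + |z|²)(Δ_c + Ē E)` with the Euler operators `E = Σ z_j ∂_j`, `Ē = Σ \bar z_i ∂_{\bar i}`.
On polynomials in `z, \bar z` the Wirtinger derivatives are formal partial derivatives, and by
the chain rule `Δ` maps a polynomial `P(u, S)` in `u = |z_a|²` and `S = |z|²` to `(L P)(u, S)`,
where `L = (1 + S)(u ∂_u² + 2u ∂_u ∂_S + S ∂_S² + ∂_u + n ∂_S + (u ∂_u + S ∂_S)²)`.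
Three applications of `L` to `u²`, evaluated at `0`, give `12 n + 28`, while the `Δ_c` part of
the same computation, applied to `g^{a\bar a} = (1 + S)(1 + u)` at `0`, gives `λ = n + 1`.
-/

open MvPolynomial Complex ComplexConjugate

theorem MvPolynomial.hasFDerivAt_eval {𝕜 σ : Type*} [NontriviallyNormedField 𝕜] [Fintype σ]
    (P : MvPolynomial σ 𝕜) (w : σ → 𝕜) :
    HasFDerivAt (fun w => eval w P)
      (∑ k, eval w (pderiv k P) • (ContinuousLinearMap.proj k : (σ → 𝕜) →L[𝕜] 𝕜)) w := by
  induction P using MvPolynomial.induction_on with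
  | C a =>
    simp only [eval_C]
    refine (hasFDerivAt_const a w).congr_fderiv ?_
    ext v
    simp
  | add p q hp hq =>
    simp only [map_add]
    refine (hp.fun_add hq).congr_fderiv ?_
    ext v
    simp [Finset.sum_add_distrib, add_mul]
  | mul_X p k hp =>
    classical
    simp only [map_mul, eval_X]
    refine (hp.fun_mul (hasFDerivAt_apply k w)).congr_fderiv ?_
    ext v
    simp [pderiv_X, Pi.single_apply, add_mul, Finset.sum_add_distrib, Finset.mul_sum, mul_assoc,
      apply_ite (eval w)]

theorem MvPolynomial.pderiv_pderiv_comm {R σ : Type*} [CommSemiring R] (i j : σ)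
    (P : MvPolynomial σ R) : pderiv i (pderiv j P) = pderiv j (pderiv i P) := by
  classical
  induction P using MvPolynomial.induction_on with
  | C a => simp
  | add p q hp hq => simp [hp, hq]
  | mul_X p k hp =>
    simp only [Derivation.leibniz, pderiv_X, map_add, smul_eq_mul, hp, Pi.single_apply,
      apply_ite (pderiv _), Derivation.map_one_eq_zero, map_zero, ite_self, mul_zero]
    ring

theorem Derivation.map_mvPolynomial_aeval {R A M σ : Type*} [CommSemiring R] [CommSemiring A]
    [Algebra R A] [AddCommMonoid M] [Module A M] [Module R M] [IsScalarTower R A M] [Fintype σ]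
    (D : Derivation R A M) (f : σ → A) (P : MvPolynomial σ R) :
    D (aeval f P) = ∑ k, aeval f (pderiv k P) • D (f k) := by
  classical
  induction P using MvPolynomial.induction_on with
  | C a => simp
  | add p q hp hq => simp [hp, hq, add_smul, Finset.sum_add_distrib]
  | mul_X p k hp =>
    simp [hp, pderiv_X, Pi.single_apply, add_smul, mul_smul, Finset.sum_add_distrib,
      Finset.smul_sum, apply_ite (aeval f), ite_smul]

namespace FubiniStudy

/-- Polynomials in `z` and `z̄`: `X (.inl k)` stands for `z k` and `X (.inr k)` for `z̄ k`. -/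
abbrev PolyZZbar (n : ℕ) : Type := MvPolynomial (Fin n ⊕ Fin n) ℂ

variable {n : ℕ}

noncomputable section

def zzbar : (Fin n → ℂ) →L[ℝ] (Fin n ⊕ Fin n → ℂ) :=
  ContinuousLinearMap.pi (Sum.elim (ContinuousLinearMap.proj (R := ℝ))
    fun k => conjCLE.toContinuousLinearMap ∘L ContinuousLinearMap.proj k)

@[simp] theorem zzbar_inl (z : Fin n → ℂ) (k : Fin n) : zzbar z (.inl k) = z k := rfl
@[simp] theorem zzbar_inr (z : Fin n → ℂ) (k : Fin n) : zzbar z (.inr k) = conj (z k) := rfl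

theorem fderiv_eval_zzbar (P : PolyZZbar n) (z v : Fin n → ℂ) :
    fderiv ℝ (fun z => eval (zzbar z) P) z v
      = ∑ s, eval (zzbar z) (pderiv s P) * zzbar v s := by
  have h := ((hasFDerivAt_eval P (zzbar z)).restrictScalars ℝ).comp z zzbar.hasFDerivAt
  rw [show (fun z => eval (zzbar z) P) = (fun w => eval w P) ∘ zzbar from rfl, h.fderiv]
  simp

theorem fderiv_eval_zzbar_single (P : PolyZZbar n) (z : Fin n → ℂ) (j : Fin n) (c : ℂ) :
    fderiv ℝ (fun z => eval (zzbar z) P) z (Pi.single j c)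
      = c * eval (zzbar z) (pderiv (.inl j) P) + conj c * eval (zzbar z) (pderiv (.inr j) P) := by
  simp [fderiv_eval_zzbar, Fintype.sum_sum_type, Pi.single_apply, apply_ite conj, mul_comm]

theorem dz_eval_zzbar (j : Fin n) (P : PolyZZbar n) :
    dz j (fun z => eval (zzbar z) P) = fun z => eval (zzbar z) (pderiv (.inl j) P) := by
  funext z
  rw [dz, fderiv_eval_zzbar_single, fderiv_eval_zzbar_single, conj_I, map_one]
  linear_combination
    (eval (zzbar z) (pderiv (.inr j) P) - eval (zzbar z) (pderiv (.inl j) P)) / 2 * I_sq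

theorem dzbar_eval_zzbar (j : Fin n) (P : PolyZZbar n) :
    dzbar j (fun z => eval (zzbar z) P) = fun z => eval (zzbar z) (pderiv (.inr j) P) := by
  funext z
  rw [dzbar, fderiv_eval_zzbar_single, fderiv_eval_zzbar_single, conj_I, map_one]
  linear_combination
    (eval (zzbar z) (pderiv (.inl j) P) - eval (zzbar z) (pderiv (.inr j) P)) / 2 * I_sq

def sqAbsPoly (a : Fin n) : PolyZZbar n := X (.inl a) * X (.inr a)

def sqNormPoly : PolyZZbar n := ∑ k, sqAbsPoly k

def euler (P : PolyZZbar n) : PolyZZbar n :=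
  ∑ j, X (.inl j) * pderiv (.inl j) P

def eulerBar (P : PolyZZbar n) : PolyZZbar n :=
  ∑ i, X (.inr i) * pderiv (.inr i) P

def lapEucl (P : PolyZZbar n) : PolyZZbar n :=
  ∑ i, pderiv (.inr i) (pderiv (.inl i) P)

def lapFS (P : PolyZZbar n) : PolyZZbar n :=
  (1 + sqNormPoly) * (lapEucl P + eulerBar (euler P))

theorem eval_zzbar_sqAbsPoly (z : Fin n → ℂ) (a : Fin n) :
    eval (zzbar z) (sqAbsPoly a) = (normSq (z a) : ℂ) := by
  simp [sqAbsPoly, mul_conj]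

theorem eval_zzbar_sqNormPoly (z : Fin n → ℂ) :
    eval (zzbar z) sqNormPoly = ∑ k, (normSq (z k) : ℂ) := by
  simp [sqNormPoly, eval_zzbar_sqAbsPoly]

theorem eval_zzbar_eulerBar_euler (z : Fin n → ℂ) (P : PolyZZbar n) :
    eval (zzbar z) (eulerBar (euler P))
      = ∑ i, ∑ j, z j * (conj (z i) * eval (zzbar z) (pderiv (.inr i) (pderiv (.inl j) P))) := by
  simp [eulerBar, euler, Finset.mul_sum, mul_left_comm]

theorem kLapFS_eval_zzbar (P : PolyZZbar n) :
    kLapFS (fun z => eval (zzbar z) P) = fun z => eval (zzbar z) (lapFS P) := by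
  funext z
  have hg : eval (zzbar z) (1 + sqNormPoly) = ((1 + ∑ k, normSq (z k) : ℝ) : ℂ) := by
    simp [eval_zzbar_sqNormPoly]
  simp only [kLapFS, dz_eval_zzbar, dzbar_eval_zzbar, lapFS, map_mul, map_add, hg,
    eval_zzbar_eulerBar_euler, lapEucl, map_sum, ginvFS]
  simp only [mul_assoc, ← Finset.mul_sum]
  simp [add_mul, Finset.sum_add_distrib, ite_mul, mul_assoc]

def absSqSubst (a : Fin n) : MvPolynomial (Fin 2) ℂ →ₐ[ℂ] PolyZZbar n :=
  aeval ![sqAbsPoly a, sqNormPoly]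

@[simp] theorem absSqSubst_X_zero (a : Fin n) : absSqSubst a (X 0) = sqAbsPoly a := by
  simp [absSqSubst]

@[simp] theorem absSqSubst_X_one (a : Fin n) : absSqSubst a (X 1) = sqNormPoly := by
  simp [absSqSubst]

theorem pderiv_inl_absSqSubst (a i : Fin n) (P : MvPolynomial (Fin 2) ℂ) :
    pderiv (.inl i) (absSqSubst a P)
      = absSqSubst a (pderiv 0 P) * (if i = a then X (.inr a) else 0)
        + absSqSubst a (pderiv 1 P) * X (.inr i) := by
  rw [absSqSubst, Derivation.map_mvPolynomial_aeval]
  simp [sqAbsPoly, sqNormPoly, pderiv_X, Pi.single_apply, @eq_comm _ a i]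

theorem pderiv_inr_absSqSubst (a i : Fin n) (P : MvPolynomial (Fin 2) ℂ) :
    pderiv (.inr i) (absSqSubst a P)
      = absSqSubst a (pderiv 0 P) * (if i = a then X (.inl a) else 0)
        + absSqSubst a (pderiv 1 P) * X (.inl i) := by
  rw [absSqSubst, Derivation.map_mvPolynomial_aeval]
  simp [sqAbsPoly, sqNormPoly, pderiv_X, Pi.single_apply, @eq_comm _ a i, mul_comm]

def euler₂ (P : MvPolynomial (Fin 2) ℂ) : MvPolynomial (Fin 2) ℂ :=
  X 0 * pderiv 0 P + X 1 * pderiv 1 P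

def lap₂ (n : ℕ) (P : MvPolynomial (Fin 2) ℂ) : MvPolynomial (Fin 2) ℂ :=
  X 0 * (pderiv 0 (pderiv 0 P) + pderiv 0 (pderiv 1 P) + pderiv 1 (pderiv 0 P))
    + X 1 * pderiv 1 (pderiv 1 P) + pderiv 0 P + (n : MvPolynomial (Fin 2) ℂ) * pderiv 1 P

def lapFS₂ (n : ℕ) (P : MvPolynomial (Fin 2) ℂ) : MvPolynomial (Fin 2) ℂ :=
  (1 + X 1) * (lap₂ n P + euler₂ (euler₂ P))

theorem euler_absSqSubst (a : Fin n) (P : MvPolynomial (Fin 2) ℂ) :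
    euler (absSqSubst a P) = absSqSubst a (euler₂ P) := by
  simp only [euler, euler₂, pderiv_inl_absSqSubst, mul_add, Finset.sum_add_distrib, map_add,
    map_mul, absSqSubst_X_zero, absSqSubst_X_one, mul_ite, mul_zero, Finset.sum_ite_eq',
    Finset.mem_univ, if_true, mul_left_comm _ (absSqSubst a _), ← Finset.mul_sum]
  simp only [sqNormPoly, sqAbsPoly]
  ring

theorem eulerBar_absSqSubst (a : Fin n) (P : MvPolynomial (Fin 2) ℂ) :
    eulerBar (absSqSubst a P) = absSqSubst a (euler₂ P) := by
  simp only [eulerBar, euler₂, pderiv_inr_absSqSubst, mul_add, Finset.sum_add_distrib, map_add,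
    map_mul, absSqSubst_X_zero, absSqSubst_X_one, mul_ite, mul_zero, Finset.sum_ite_eq',
    Finset.mem_univ, if_true, mul_left_comm _ (absSqSubst a _), ← Finset.mul_sum]
  simp only [sqNormPoly, sqAbsPoly, mul_comm (X (Sum.inr _)) (X (Sum.inl _))]
  ring

theorem lapEucl_absSqSubst (a : Fin n) (P : MvPolynomial (Fin 2) ℂ) :
    lapEucl (absSqSubst a P) = absSqSubst a (lap₂ n P) := by
  simp only [lapEucl, lap₂, pderiv_inl_absSqSubst, pderiv_inr_absSqSubst, Derivation.leibniz,
    map_add, map_mul, smul_eq_mul, apply_ite (pderiv _), map_zero, pderiv_X_self, mul_add, mul_ite,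
    mul_zero, mul_one, Finset.sum_add_distrib, Finset.sum_ite_eq', Finset.mem_univ, if_true,
    absSqSubst_X_zero, absSqSubst_X_one, mul_left_comm _ (absSqSubst a _), ← Finset.mul_sum,
    Finset.sum_const, Finset.card_univ, Fintype.card_fin, nsmul_eq_mul, map_natCast]
  simp only [sqNormPoly, sqAbsPoly, mul_comm (X (Sum.inr _)) (X (Sum.inl _))]
  ring

theorem lapFS_absSqSubst (a : Fin n) (P : MvPolynomial (Fin 2) ℂ) :
    lapFS (absSqSubst a P) = absSqSubst a (lapFS₂ n P) := by
  simp [lapFS, lapFS₂, lapEucl_absSqSubst, euler_absSqSubst, eulerBar_absSqSubst]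

theorem eval_zzbar_absSqSubst (z : Fin n → ℂ) (a : Fin n) (P : MvPolynomial (Fin 2) ℂ) :
    eval (zzbar z) (absSqSubst a P) = eval ![(normSq (z a) : ℂ), ∑ k, (normSq (z k) : ℂ)] P := by
  change aeval (zzbar z) (aeval _ P) = aeval _ P
  rw [← AlgHom.comp_apply, comp_aeval]
  congr
  ext i
  fin_cases i <;> simp [eval_zzbar_sqAbsPoly, eval_zzbar_sqNormPoly]

theorem eval_zzbar_zero_absSqSubst (a : Fin n) (P : MvPolynomial (Fin 2) ℂ) :
    eval (zzbar 0) (absSqSubst a P) = eval 0 P := by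
  rw [eval_zzbar_absSqSubst]
  congr
  ext i
  fin_cases i <;> simp

theorem kLapFS_iterate_eval_absSqSubst (a : Fin n) (P : MvPolynomial (Fin 2) ℂ) (k : ℕ) :
    kLapFS^[k] (fun z => eval (zzbar z) (absSqSubst a P))
      = fun z => eval (zzbar z) (absSqSubst a ((lapFS₂ n)^[k] P)) := by
  have h : Function.Semiconj (fun P z => eval (zzbar z) (absSqSubst a P)) (lapFS₂ n) kLapFS :=
    fun P => by simp only [kLapFS_eval_zzbar, lapFS_absSqSubst]
  exact (h.iterate_right k P).symm

theorem ginvFS_self_eq_eval (z : Fin n → ℂ) (a : Fin n) :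
    ginvFS z a a = eval (zzbar z) (absSqSubst a ((1 + X 1) * (1 + X 0))) := by
  simp [ginvFS, eval_zzbar_sqAbsPoly, eval_zzbar_sqNormPoly, mul_conj]

theorem sum_dz_dzbar_ginvFS_self (a : Fin n) :
    ∑ h, dz h (dzbar h (fun z => ginvFS z a a)) 0 = n + 1 := by
  have h (P : PolyZZbar n) :
      ∑ h, pderiv (.inl h) (pderiv (.inr h) P) = lapEucl P := by
    simp [lapEucl, pderiv_pderiv_comm (Sum.inl _ : Fin n ⊕ Fin n)]
  simp only [ginvFS_self_eq_eval, dzbar_eval_zzbar, dz_eval_zzbar, ← map_sum, h,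
    lapEucl_absSqSubst, eval_zzbar_zero_absSqSubst]
  simp only [eval_zero, lap₂, Derivation.leibniz, map_add, Derivation.map_one_eq_zero, pderiv_X,
    Pi.single_eq_same, Pi.single_eq_of_ne one_ne_zero, Pi.single_eq_of_ne zero_ne_one, smul_eq_mul,
    map_mul, map_one, map_natCast, constantCoeff_X, mul_one, mul_zero, zero_mul, zero_add, add_zero]
  ring

theorem eval_zero_lapFS₂_iterate_three_X_zero_sq :
    eval 0 ((lapFS₂ n)^[3] (X 0 ^ 2)) = 12 * n + 28 := by
  change eval 0 (lapFS₂ n (lapFS₂ n (lapFS₂ n (X 0 ^ 2)))) = _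
  simp only [lapFS₂, lap₂, euler₂, sq, eval_zero, Derivation.leibniz, Derivation.map_one_eq_zero, Derivation.map_natCast,
    pderiv_X, Pi.single_eq_same, Pi.single_eq_of_ne one_ne_zero, Pi.single_eq_of_ne zero_ne_one,
    smul_eq_mul, map_add, map_mul, map_zero, map_one, map_natCast, constantCoeff_X, mul_one,
    one_mul, mul_zero, zero_mul, add_zero, zero_add]
  ring

end

end FubiniStudy

open FubiniStudy

/-- for the Fubini–Study metric on `ℂⁿ` with Einstein constant `λ`
(normalized by `∑ₕ ∂²g^{i \bar j}/∂z_h∂\bar z_h(0) = λ δ^{ij}`), one has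
`Δ³(|z₁|⁴)(0) = 12λ + 16`. -/
theorem kLapFS_cube_z1_fourth (n : ℕ) (hn : 0 < n) (lam : ℂ)
    (hlam : ∀ i j : Fin n,
      (∑ h, dz h (dzbar h (fun z => ginvFS z i j)) 0) = lam * (if i = j then 1 else 0)) :
    (kLapFS^[3] (fun z : Fin n → ℂ =>
      (z ⟨0, hn⟩ * starRingEnd ℂ (z ⟨0, hn⟩)) ^ 2)) 0 = 12 * lam + 16 := by
  set a : Fin n := ⟨0, hn⟩
  have hf : (fun z : Fin n → ℂ => (z a * conj (z a)) ^ 2)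
      = fun z => eval (zzbar z) (absSqSubst a (X 0 ^ 2)) := by
    funext z
    simp [eval_zzbar_sqAbsPoly, mul_conj]
  have hlam' : lam = n + 1 := by
    simpa [sum_dz_dzbar_ginvFS_self] using (hlam a a).symm
  rw [hf, kLapFS_iterate_eval_absSqSubst]
  beta_reduce
  rw [eval_zzbar_zero_absSqSubst, eval_zero_lapFS₂_iterate_three_X_zero_sq, hlam']
  ring
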